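/- arXiv:1910.08841 — 4 statements merged into one kernel-verified Lean document; each statement's English description precedes it below -/
import Mathlib

section
/- Let c₁, c₂ > 0 and 0 < δ₁ < δ₂ < 1. Consider the scalar recursion w_{t+1} = (1 - c₁/(t+1)^{δ₁}) w_t + c₂/(t+1)^{δ₂} with arbitrary initial condition w₀ ∈ ℝ. Then for every δ₀ with 0 ≤ δ₀ < δ₂ - δ₁, lim_{t→∞} (t+1)^{δ₀} w_t = 0. -/
open Filter Real

private lemma ev_rpow_ge (p C : ℝ) (hp : 0 < p) :
    ∀ᶠ n : ℕ in atTop, C ≤ ((n : ℝ) + 1) ^ p := by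
  have h : Tendsto (fun n : ℕ => ((n : ℝ) + 1) ^ p) atTop atTop :=
    (tendsto_rpow_atTop hp).comp
      (tendsto_atTop_add_const_right _ 1 tendsto_natCast_atTop_atTop)
  exact h.eventually_ge_atTop C

private lemma aux_tendsto (x α β : ℕ → ℝ) (hx : ∀ n, 0 ≤ x n)
    (hα : ∀ᶠ n in atTop, α n ∈ Set.Icc (0:ℝ) 1)
    (hrec : ∀ᶠ n in atTop, x (n + 1) ≤ (1 - α n) * x n + β n)
    (hdiv : Tendsto (fun n => ∑ t ∈ Finset.range n, α t) atTop atTop)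
    (hβ : ∀ ε > 0, ∀ᶠ n in atTop, β n ≤ ε * α n) :
    Tendsto x atTop (nhds 0) := by
  rw [Metric.tendsto_atTop]
  intro ε hε
  obtain ⟨T, hT⟩ := eventually_atTop.mp ((hα.and hrec).and (hβ (ε/2) (half_pos hε)))
  -- key inductive bound
  have key : ∀ n, T ≤ n →
      x n ≤ ε/2 + (∏ t ∈ Finset.Ico T n, (1 - α t)) * x T := by
    intro n hn
    induction n, hn using Nat.le_induction with
    | base => simp [le_of_lt (half_pos hε)]
    | succ n hn ih =>
      obtain ⟨⟨hα1, hα2⟩, hβ1⟩ := hT n hn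
      have h01 : 0 ≤ 1 - α n := by linarith [hα1.2]
      calc x (n + 1) ≤ (1 - α n) * x n + β n := hα2
        _ ≤ (1 - α n) * (ε/2 + (∏ t ∈ Finset.Ico T n, (1 - α t)) * x T)
              + (ε/2) * α n := by
            gcongr
        _ = ε/2 + ((∏ t ∈ Finset.Ico T n, (1 - α t)) * (1 - α n)) * x T := by ring
        _ = ε/2 + (∏ t ∈ Finset.Ico T (n+1), (1 - α t)) * x T := by
            rw [Finset.prod_Ico_succ_top hn]
  -- product bound by exponential
  have prodle : ∀ n, T ≤ n →
      (∏ t ∈ Finset.Ico T n, (1 - α t)) * x T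
        ≤ Real.exp (-(∑ t ∈ Finset.Ico T n, α t)) * x T := by
    intro n hn
    apply mul_le_mul_of_nonneg_right _ (hx T)
    calc ∏ t ∈ Finset.Ico T n, (1 - α t)
        ≤ ∏ t ∈ Finset.Ico T n, Real.exp (-(α t)) := by
          apply Finset.prod_le_prod
          · intro t ht
            have := (hT t (Finset.mem_Ico.mp ht).1).1.1.2
            linarith
          · intro t ht
            have h := Real.add_one_le_exp (-(α t))
            linarith
      _ = Real.exp (∑ t ∈ Finset.Ico T n, -(α t)) := (Real.exp_sum _ _).symm
      _ = Real.exp (-(∑ t ∈ Finset.Ico T n, α t)) := by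
          rw [Finset.sum_neg_distrib]
  -- the exponential term tends to 0
  have hsum : Tendsto (fun n => ∑ t ∈ Finset.Ico T n, α t) atTop atTop := by
    have heq : (fun n => (∑ t ∈ Finset.range n, α t) + -(∑ t ∈ Finset.range T, α t))
        =ᶠ[atTop] (fun n => ∑ t ∈ Finset.Ico T n, α t) := by
      filter_upwards [eventually_ge_atTop T] with n hn
      rw [Finset.sum_Ico_eq_sub _ hn, sub_eq_add_neg]
    exact Tendsto.congr' heq (tendsto_atTop_add_const_right _ _ hdiv)
  have hexp : Tendsto (fun n => Real.exp (-(∑ t ∈ Finset.Ico T n, α t)) * x T)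
      atTop (nhds 0) := by
    have h0 : Tendsto (fun n => Real.exp (-(∑ t ∈ Finset.Ico T n, α t)))
        atTop (nhds 0) :=
      Real.tendsto_exp_atBot.comp (tendsto_neg_atTop_atBot.comp hsum)
    simpa using h0.mul_const (x T)
  have hev : ∀ᶠ n in atTop,
      Real.exp (-(∑ t ∈ Finset.Ico T n, α t)) * x T < ε/2 := by
    exact hexp.eventually_lt_const (half_pos hε)
  obtain ⟨N, hN⟩ := eventually_atTop.mp hev
  refine ⟨max T N, fun n hn => ?_⟩
  have hTn : T ≤ n := le_trans (le_max_left _ _) hn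
  have hNn : N ≤ n := le_trans (le_max_right _ _) hn
  rw [Real.dist_eq, sub_zero, abs_of_nonneg (hx n)]
  calc x n ≤ ε/2 + (∏ t ∈ Finset.Ico T n, (1 - α t)) * x T := key n hTn
    _ ≤ ε/2 + Real.exp (-(∑ t ∈ Finset.Ico T n, α t)) * x T := by
        linarith [prodle n hTn]
    _ < ε/2 + ε/2 := by linarith [hN n hNn]
    _ = ε := by ring

theorem stmt_0 (c₁ c₂ δ₁ δ₂ : ℝ) (hc₁ : 0 < c₁) (hc₂ : 0 < c₂)
    (h₁ : 0 < δ₁) (h₁₂ : δ₁ < δ₂) (h₂ : δ₂ < 1)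
    (w : ℕ → ℝ)
    (hrec : ∀ t : ℕ, w (t + 1) =
      (1 - c₁ / ((t : ℝ) + 1) ^ δ₁) * w t + c₂ / ((t : ℝ) + 1) ^ δ₂) :
    ∀ δ₀ : ℝ, 0 ≤ δ₀ → δ₀ < δ₂ - δ₁ →
      Tendsto (fun t : ℕ => ((t : ℝ) + 1) ^ δ₀ * w t) atTop (nhds 0) := by
  intro δ₀ hδ₀ hδ₀'
  set x : ℕ → ℝ := fun n => ((n : ℝ) + 1) ^ δ₀ * |w n| with hxdef
  set α : ℕ → ℝ := fun n => (c₁/2) / ((n : ℝ) + 1) ^ δ₁ with hαdef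
  set β : ℕ → ℝ := fun n => ((n : ℝ) + 2) ^ δ₀ * (c₂ / ((n : ℝ) + 1) ^ δ₂) with hβdef
  have hA : ∀ n : ℕ, (0:ℝ) < (n : ℝ) + 1 := fun n => by positivity
  have hx : ∀ n, 0 ≤ x n := fun n => by
    simp only [hxdef]; positivity
  have hδ₀1 : δ₀ ≤ 1 := by linarith
  -- apply the aux lemma
  have main : Tendsto x atTop (nhds 0) := by
    apply aux_tendsto x α β hx
    · -- α ∈ [0,1] eventually
      filter_upwards [ev_rpow_ge δ₁ (c₁/2) h₁] with n hn
      constructor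
      · exact le_of_lt (div_pos (by linarith) (by positivity))
      · rw [div_le_one (by positivity)]; exact hn
    · -- recursion eventually
      filter_upwards [ev_rpow_ge δ₁ c₁ h₁,
        ev_rpow_ge (1 - δ₁) (2 * δ₀ / c₁) (by linarith)] with n hn1 hn2
      have hAp : (0:ℝ) < ((n:ℝ) + 1) ^ δ₁ := by positivity
      have hr1 : 0 ≤ 1 - c₁ / ((n:ℝ) + 1) ^ δ₁ := by
        rw [sub_nonneg, div_le_one hAp]; exact hn1
      have hr0 : 0 ≤ c₁ / ((n:ℝ) + 1) ^ δ₁ :=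
        le_of_lt (div_pos hc₁ (by positivity))
      have hw : |w (n+1)| ≤ (1 - c₁ / ((n:ℝ) + 1) ^ δ₁) * |w n|
          + c₂ / ((n:ℝ) + 1) ^ δ₂ := by
        rw [hrec n]
        calc |(1 - c₁ / ((n:ℝ) + 1) ^ δ₁) * w n + c₂ / ((n:ℝ) + 1) ^ δ₂|
            ≤ |(1 - c₁ / ((n:ℝ) + 1) ^ δ₁) * w n| + |c₂ / ((n:ℝ) + 1) ^ δ₂| :=
              abs_add_le _ _
          _ = (1 - c₁ / ((n:ℝ) + 1) ^ δ₁) * |w n| + c₂ / ((n:ℝ) + 1) ^ δ₂ := by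
              rw [abs_mul, abs_of_nonneg hr1,
                abs_of_nonneg (le_of_lt (div_pos hc₂ (by positivity)))]
      have hcast : ((n + 1 : ℕ) : ℝ) + 1 = (n : ℝ) + 2 := by push_cast; ring
      have hx1 : x (n + 1) = ((n:ℝ) + 2) ^ δ₀ * |w (n+1)| := by
        simp only [hxdef]
        rw [show ((n+1:ℕ):ℝ) + 1 = (n:ℝ) + 2 by push_cast; ring]
      -- key multiplicative estimate
      have hB : ((n:ℝ) + 2) ^ δ₀ * (1 - c₁ / ((n:ℝ) + 1) ^ δ₁)
          ≤ (1 - α n) * ((n:ℝ) + 1) ^ δ₀ := by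
        have hfrac : ((n:ℝ) + 2) ^ δ₀
            ≤ ((n:ℝ) + 1) ^ δ₀ * (1 + δ₀ / ((n:ℝ) + 1)) := by
          have h1 : (n:ℝ) + 2 = ((n:ℝ) + 1) * (1 + 1/((n:ℝ)+1)) := by
            field_simp
            ring
          rw [h1, Real.mul_rpow (le_of_lt (hA n)) (by positivity)]
          apply mul_le_mul_of_nonneg_left _ (by positivity)
          have hb := rpow_one_add_le_one_add_mul_self
            (s := 1/((n:ℝ)+1))
            (le_trans (by norm_num : (-1:ℝ) ≤ 0) (by positivity)) hδ₀ hδ₀1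
          calc (1 + 1/((n:ℝ)+1)) ^ δ₀ ≤ 1 + δ₀ * (1/((n:ℝ)+1)) := hb
            _ = 1 + δ₀ / ((n:ℝ)+1) := by ring
        have hsmall : δ₀ / ((n:ℝ) + 1) ≤ α n := by
          simp only [hαdef]
          rw [div_le_div_iff₀ (hA n) (by positivity)]
          have : ((n:ℝ)+1) ^ δ₁ * ((n:ℝ)+1) ^ (1 - δ₁) = (n:ℝ)+1 := by
            rw [← Real.rpow_add (hA n)]; norm_num
          calc δ₀ * ((n:ℝ)+1) ^ δ₁
              ≤ (c₁/2 * ((n:ℝ)+1) ^ (1 - δ₁)) * ((n:ℝ)+1) ^ δ₁ := by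
                apply mul_le_mul_of_nonneg_right _ (le_of_lt (by positivity))
                rw [div_le_iff₀ hc₁] at hn2
                linarith
            _ = c₁/2 * ((n:ℝ)+1) := by rw [mul_assoc, mul_comm (((n:ℝ)+1) ^ (1-δ₁)), this]
        calc ((n:ℝ) + 2) ^ δ₀ * (1 - c₁ / ((n:ℝ) + 1) ^ δ₁)
            ≤ (((n:ℝ) + 1) ^ δ₀ * (1 + δ₀ / ((n:ℝ) + 1)))
                * (1 - c₁ / ((n:ℝ) + 1) ^ δ₁) := by
              apply mul_le_mul_of_nonneg_right hfrac hr1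
          _ ≤ (1 - α n) * ((n:ℝ) + 1) ^ δ₀ := by
              have hαr : α n = (c₁ / ((n:ℝ)+1)^δ₁) / 2 := by
                simp only [hαdef]; ring
              have hu : 0 ≤ δ₀ / ((n:ℝ)+1) := div_nonneg hδ₀ (le_of_lt (hA n))
              have hP : (0:ℝ) ≤ ((n:ℝ)+1) ^ δ₀ := by positivity
              have key : (1 + δ₀ / ((n:ℝ) + 1)) * (1 - c₁ / ((n:ℝ) + 1) ^ δ₁)
                  ≤ 1 - α n := by
                rw [hαr] at hsmall ⊢
                nlinarith [hr0, hr1, hu, hsmall]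
              calc (((n:ℝ)+1)^δ₀ * (1 + δ₀/((n:ℝ)+1))) * (1 - c₁/((n:ℝ)+1)^δ₁)
                  = ((n:ℝ)+1)^δ₀ * ((1 + δ₀/((n:ℝ)+1)) * (1 - c₁/((n:ℝ)+1)^δ₁)) := by
                    ring
                _ ≤ ((n:ℝ)+1)^δ₀ * (1 - α n) := mul_le_mul_of_nonneg_left key hP
                _ = (1 - α n) * ((n:ℝ)+1)^δ₀ := by ring
      rw [hx1]
      have hBnn : (0:ℝ) ≤ ((n:ℝ) + 2) ^ δ₀ := by positivity
      calc ((n:ℝ) + 2) ^ δ₀ * |w (n+1)|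
          ≤ ((n:ℝ) + 2) ^ δ₀ * ((1 - c₁ / ((n:ℝ) + 1) ^ δ₁) * |w n|
              + c₂ / ((n:ℝ) + 1) ^ δ₂) := mul_le_mul_of_nonneg_left hw hBnn
        _ = (((n:ℝ) + 2) ^ δ₀ * (1 - c₁ / ((n:ℝ) + 1) ^ δ₁)) * |w n| + β n := by
            simp only [hβdef]; ring
        _ ≤ ((1 - α n) * ((n:ℝ) + 1) ^ δ₀) * |w n| + β n := by
            have := mul_le_mul_of_nonneg_right hB (abs_nonneg (w n))
            linarith
        _ = (1 - α n) * x n + β n := by simp only [hxdef]; ring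
    · -- divergence
      have hns : ¬ Summable α := by
        intro h
        have h2 : Summable (fun n : ℕ => (((n:ℝ)+1) ^ δ₁)⁻¹) := by
          have h' := h.mul_left (2/c₁)
          have he : (fun n : ℕ => (2/c₁) * α n)
              = fun n : ℕ => (((n:ℝ)+1) ^ δ₁)⁻¹ := by
            funext n
            have hc0 : c₁ ≠ 0 := ne_of_gt hc₁
            have hP : ((n:ℝ)+1) ^ δ₁ ≠ 0 := ne_of_gt (by positivity)
            simp only [hαdef]
            field_simp
          rwa [he] at h'
        have h3 : Summable (fun n : ℕ => (((n:ℕ):ℝ) ^ δ₁)⁻¹) := by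
          rw [← summable_nat_add_iff 1]
          convert h2 using 2 with n
          · rfl
          · push_cast; ring
        have := Real.summable_nat_rpow_inv.mp h3
        linarith
      have hnn : ∀ n, 0 ≤ α n := fun n =>
        le_of_lt (div_pos (by linarith) (by positivity))
      exact (not_summable_iff_tendsto_nat_atTop_of_nonneg hnn).mp hns
    · -- β small vs α
      intro ε hε
      filter_upwards [ev_rpow_ge (δ₂ - δ₁ - δ₀) (4 * c₂ / (ε * c₁))
        (by linarith)] with n hn
      have hAn := hA n
      have h2A : (n:ℝ) + 2 ≤ 2 * ((n:ℝ) + 1) := by linarith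
      have hBle : ((n:ℝ) + 2) ^ δ₀ ≤ 2 * ((n:ℝ) + 1) ^ δ₀ := by
        calc ((n:ℝ) + 2) ^ δ₀ ≤ (2 * ((n:ℝ) + 1)) ^ δ₀ :=
              Real.rpow_le_rpow (by positivity) h2A hδ₀
          _ = 2 ^ δ₀ * ((n:ℝ) + 1) ^ δ₀ :=
              Real.mul_rpow (by norm_num) (le_of_lt hAn)
          _ ≤ 2 * ((n:ℝ) + 1) ^ δ₀ := by
              apply mul_le_mul_of_nonneg_right _ (by positivity)
              calc (2:ℝ) ^ δ₀ ≤ 2 ^ (1:ℝ) :=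
                    Real.rpow_le_rpow_of_exponent_le (by norm_num) hδ₀1
                _ = 2 := by norm_num
      have hsplit : ((n:ℝ)+1) ^ δ₂
          = ((n:ℝ)+1) ^ δ₀ * ((n:ℝ)+1) ^ δ₁ * ((n:ℝ)+1) ^ (δ₂ - δ₁ - δ₀) := by
        rw [← Real.rpow_add hAn, ← Real.rpow_add hAn]; ring_nf
      have hfin : 4 * c₂ ≤ ε * c₁ * ((n:ℝ)+1) ^ (δ₂ - δ₁ - δ₀) := by
        rw [div_le_iff₀ (mul_pos hε hc₁)] at hn
        linarith
      have hP0 : (0:ℝ) < ((n:ℝ)+1) ^ δ₀ := by positivity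
      have hP1 : (0:ℝ) < ((n:ℝ)+1) ^ δ₁ := by positivity
      have hP2 : (0:ℝ) < ((n:ℝ)+1) ^ δ₂ := by positivity
      simp only [hβdef, hαdef]
      calc ((n:ℝ) + 2) ^ δ₀ * (c₂ / ((n:ℝ)+1) ^ δ₂)
          ≤ 2 * ((n:ℝ)+1) ^ δ₀ * (c₂ / ((n:ℝ)+1) ^ δ₂) :=
            mul_le_mul_of_nonneg_right hBle (le_of_lt (div_pos hc₂ hP2))
        _ = (2 * ((n:ℝ)+1) ^ δ₀ * c₂) / ((n:ℝ)+1) ^ δ₂ := by ring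
        _ ≤ (ε * c₁) / (2 * ((n:ℝ)+1) ^ δ₁) := by
            rw [div_le_div_iff₀ hP2 (by positivity)]
            calc 2 * ((n:ℝ)+1) ^ δ₀ * c₂ * (2 * ((n:ℝ)+1) ^ δ₁)
                = 4 * c₂ * (((n:ℝ)+1) ^ δ₀ * ((n:ℝ)+1) ^ δ₁) := by ring
              _ ≤ ε * c₁ * ((n:ℝ)+1) ^ (δ₂ - δ₁ - δ₀)
                    * (((n:ℝ)+1) ^ δ₀ * ((n:ℝ)+1) ^ δ₁) :=
                  mul_le_mul_of_nonneg_right hfin (le_of_lt (mul_pos hP0 hP1))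
              _ = ε * c₁ * ((n:ℝ)+1) ^ δ₂ := by rw [hsplit]; ring
        _ = ε * (c₁ / 2 / ((n:ℝ)+1) ^ δ₁) := by ring
  -- squeeze
  apply squeeze_zero_norm _ main
  intro n
  simp only [hxdef, Real.norm_eq_abs, abs_mul,
    abs_of_nonneg (le_of_lt (Real.rpow_pos_of_pos (hA n) δ₀))]
  exact le_rfl
end

section
/- Let A₁ be a symmetric positive definite k×k real matrix with minimum eigenvalue λ_min(A₁). Let x ∈ ℝ^k be nonzero and let y ∈ ℝ^k satisfy ‖y‖₂ < λ_min(A₁)·‖x‖₂. Then there exists a symmetric positive definite matrix A₂ such that A₂ x = A₁ x + y and λ_min(A₂) ≥ λ_min(A₁) − ‖y‖₂/‖x‖₂. -/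
open Matrix

/-- Euclidean norm of a real vector. -/
noncomputable def euclNorm {k : ℕ} (v : Fin k → ℝ) : ℝ := Real.sqrt (∑ i, v i ^ 2)

lemma euclNorm_nonneg {k : ℕ} (v : Fin k → ℝ) : 0 ≤ euclNorm v := Real.sqrt_nonneg _

lemma euclNorm_sq {k : ℕ} (v : Fin k → ℝ) : euclNorm v ^ 2 = ∑ i, v i ^ 2 :=
  Real.sq_sqrt (Finset.sum_nonneg fun _ _ => sq_nonneg _)

lemma dot_self_eq_enorm_sq {k : ℕ} (v : Fin k → ℝ) : v ⬝ᵥ v = euclNorm v ^ 2 := by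
  rw [euclNorm_sq]; simp [dotProduct, sq]

lemma euclNorm_pos {k : ℕ} {v : Fin k → ℝ} (hv : v ≠ 0) : 0 < euclNorm v := by
  have h : ∃ i, v i ≠ 0 := by
    by_contra h
    push_neg at h
    exact hv (funext h)
  obtain ⟨i, hi⟩ := h
  apply Real.sqrt_pos.mpr
  have h1 : (0:ℝ) < v i ^ 2 := by positivity
  exact lt_of_lt_of_le h1
    (Finset.single_le_sum (f := fun j => v j ^ 2) (fun j _ => sq_nonneg _) (Finset.mem_univ i))

lemma euclNorm_eq_zero {k : ℕ} {v : Fin k → ℝ} (h : euclNorm v = 0) : v = 0 := by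
  by_contra hv
  exact absurd h (ne_of_gt (euclNorm_pos hv))

lemma dot_self_pos {k : ℕ} {v : Fin k → ℝ} (hv : v ≠ 0) : 0 < v ⬝ᵥ v := by
  rw [dot_self_eq_enorm_sq]; exact pow_pos (euclNorm_pos hv) 2

/-- Cauchy–Schwarz for dot products of real vectors. -/
lemma dot_sq_le {k : ℕ} (u v : Fin k → ℝ) : (u ⬝ᵥ v) ^ 2 ≤ (u ⬝ᵥ u) * (v ⬝ᵥ v) := by
  have := Finset.sum_mul_sq_le_sq_mul_sq Finset.univ u v
  simpa [dotProduct, sq] using this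

lemma herm_smul {k : ℕ} {M : Matrix (Fin k) (Fin k) ℝ} (hM : M.IsHermitian) (c : ℝ) :
    (c • M).IsHermitian := by
  rw [Matrix.IsHermitian, Matrix.conjTranspose_smul, hM.eq, star_trivial]

/-- If `B - μ•1` is PSD, every eigenvalue of `B` is at least `μ`. -/
lemma eigenvalues_ge {k : ℕ} {B : Matrix (Fin k) (Fin k) ℝ} (hB : B.IsHermitian) {μ : ℝ}
    (h : (B - μ • (1 : Matrix (Fin k) (Fin k) ℝ)).PosSemidef) (i : Fin k) :
    μ ≤ hB.eigenvalues i := by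
  set v : Fin k → ℝ := ⇑(hB.eigenvectorBasis i) with hv
  have hnorm : ‖hB.eigenvectorBasis i‖ = 1 := hB.eigenvectorBasis.orthonormal.1 i
  have hvv : v ⬝ᵥ v = 1 := by
    have h1 : (inner ℝ (hB.eigenvectorBasis i) (hB.eigenvectorBasis i) : ℝ) = 1 := by
      rw [real_inner_self_eq_norm_sq, hnorm]; norm_num
    rw [← h1]
    rw [EuclideanSpace.inner_eq_star_dotProduct]; simp [hv]
  have hev : B *ᵥ v = hB.eigenvalues i • v := hB.mulVec_eigenvectorBasis i
  have h2 := h.dotProduct_mulVec_nonneg v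
  simp only [sub_mulVec, dotProduct_sub, hev, smul_mulVec, one_mulVec,
    dotProduct_smul, star_trivial, hvv, smul_eq_mul, mul_one] at h2
  linarith

/-- If every eigenvalue of hermitian `B` is at least `μ`, then `B - μ•1` is PSD. -/
lemma sub_smul_one_posSemidef {k : ℕ} {B : Matrix (Fin k) (Fin k) ℝ} (hB : B.IsHermitian) {μ : ℝ}
    (h : ∀ i, μ ≤ hB.eigenvalues i) :
    (B - μ • (1 : Matrix (Fin k) (Fin k) ℝ)).PosSemidef := by
  set U : Matrix (Fin k) (Fin k) ℝ := (hB.eigenvectorUnitary : Matrix (Fin k) (Fin k) ℝ) with hU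
  have hUU : U * star U = 1 := (Matrix.mem_unitaryGroup_iff).mp hB.eigenvectorUnitary.2
  have hspec : B = U * diagonal (RCLike.ofReal ∘ hB.eigenvalues) * star U := hB.spectral_theorem
  have key : B - μ • (1 : Matrix (Fin k) (Fin k) ℝ)
      = U * (diagonal (RCLike.ofReal ∘ hB.eigenvalues) - μ • 1) * star U := by
    rw [mul_sub, sub_mul, ← hspec, mul_smul_comm μ U 1, mul_one, smul_mul_assoc, hUU]
  have hdiag : diagonal (RCLike.ofReal ∘ hB.eigenvalues) - μ • (1 : Matrix (Fin k) (Fin k) ℝ)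
      = diagonal (fun i => hB.eigenvalues i - μ) := by
    ext i j
    by_cases hij : i = j <;>
      simp [hij, diagonal, Matrix.one_apply, RCLike.ofReal_real_eq_id]
  rw [key, hdiag]
  have hd : (diagonal (fun i => hB.eigenvalues i - μ)).PosSemidef :=
    posSemidef_diagonal_iff.mpr fun i => by linarith [h i]
  have := hd.mul_mul_conjTranspose_same U
  simpa [Matrix.star_eq_conjTranspose] using this

theorem stmt_1 {k : ℕ} (A₁ : Matrix (Fin k) (Fin k) ℝ)
    (hA₁ : A₁.IsHermitian) (hpd : A₁.PosDef)
    (x y : Fin k → ℝ) (hx : x ≠ 0)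
    (hy : euclNorm y < (⨅ i, hA₁.eigenvalues i) * euclNorm x) :
    ∃ (A₂ : Matrix (Fin k) (Fin k) ℝ) (hA₂ : A₂.IsHermitian),
      A₂.PosDef ∧ A₂ *ᵥ x = A₁ *ᵥ x + y ∧
      (⨅ i, hA₂.eigenvalues i) ≥ (⨅ i, hA₁.eigenvalues i) - euclNorm y / euclNorm x := by
  have hk : k ≠ 0 := by
    rintro rfl
    exact hx (funext fun i => absurd i.2 (by omega))
  haveI : Nonempty (Fin k) := ⟨⟨0, Nat.pos_of_ne_zero hk⟩⟩
  set a := euclNorm x with ha_def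
  set b := euclNorm y with hb_def
  have ha : 0 < a := euclNorm_pos hx
  have hb0 : 0 ≤ b := euclNorm_nonneg y
  set lam := ⨅ i, hA₁.eigenvalues i with hlam
  set c := b / a with hc_def
  have hc0 : 0 ≤ c := div_nonneg hb0 ha.le
  have hclam : c < lam := (div_lt_iff₀ ha).mpr hy
  have hlam_le : ∀ i, lam ≤ hA₁.eigenvalues i := fun i =>
    ciInf_le (Finite.bddBelow_range _) i
  obtain ⟨E, hEh, hEx, hEpsd⟩ :
      ∃ E : Matrix (Fin k) (Fin k) ℝ, E.IsHermitian ∧ E *ᵥ x = y ∧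
        (E + c • (1 : Matrix (Fin k) (Fin k) ℝ)).PosSemidef := by
    have ha2 : x ⬝ᵥ x = a ^ 2 := dot_self_eq_enorm_sq x
    have hb2 : y ⬝ᵥ y = b ^ 2 := dot_self_eq_enorm_sq y
    set t := x ⬝ᵥ y with ht
    set d : Fin k → ℝ := b • x - a • y with hd_def
    by_cases hd : d = 0
    · have hyx : y = c • x := by
        funext i
        have h0 := congrFun hd i
        simp only [hd_def, Pi.sub_apply, Pi.smul_apply, smul_eq_mul, Pi.zero_apply] at h0
        have h1 : b * x i = a * y i := by linarith
        simp only [Pi.smul_apply, smul_eq_mul, hc_def]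
        field_simp
        linarith
      refine ⟨c • (1 : Matrix (Fin k) (Fin k) ℝ), herm_smul isHermitian_one c, ?_, ?_⟩
      · rw [smul_mulVec, one_mulVec, hyx]
      · have h1 : c • (1 : Matrix (Fin k) (Fin k) ℝ) + c • 1 = (2 * c) • 1 := by
          rw [← add_smul]; ring_nf
        rw [h1]
        refine .of_dotProduct_mulVec_nonneg (herm_smul isHermitian_one _) fun v => ?_
        rw [smul_mulVec, one_mulVec, dotProduct_smul]
        simp only [star_trivial, smul_eq_mul]
        rcases eq_or_ne v 0 with rfl | hv
        · simp
        · exact mul_nonneg (by positivity) (dot_self_pos hv).le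
    · set q := d ⬝ᵥ d with hq
      have hqpos : 0 < q := dot_self_pos hd
      set G : Matrix (Fin k) (Fin k) ℝ := Matrix.of (fun i j => d i * d j) with hG
      have hGv : ∀ v, G *ᵥ v = (d ⬝ᵥ v) • d := by
        intro v
        funext i
        simp only [hG, mulVec, dotProduct, Matrix.of_apply, Pi.smul_apply, smul_eq_mul]
        rw [Finset.sum_mul]
        exact Finset.sum_congr rfl fun j _ => by ring
      have hGh : G.IsHermitian := by
        ext i j
        simp [hG, mul_comm]
      have hbpos : 0 < b := by
        rcases lt_or_eq_of_le hb0 with h | h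
        · exact h
        · exfalso
          have hy0 : y = 0 := euclNorm_eq_zero (by rw [← hb_def, ← h])
          apply hd
          funext i
          simp [hd_def, hy0, ← h, hb_def]
      refine ⟨c • (1 : Matrix (Fin k) (Fin k) ℝ) - (2 * c / q) • G,
        (herm_smul isHermitian_one c).sub (herm_smul hGh _), ?_, ?_⟩
      · have hdx : d ⬝ᵥ x = b * a ^ 2 - a * t := by
          simp only [hd_def, sub_dotProduct, smul_dotProduct, ha2, dotProduct_comm y x, ← ht,
            smul_eq_mul]
        have hqval : q = 2 * a * b * (a * b - t) := by
          simp only [hq, hd_def, sub_dotProduct, dotProduct_sub, smul_dotProduct,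
            dotProduct_smul, ha2, hb2, dotProduct_comm y x, ← ht, smul_eq_mul]
          ring
        have habt : a * b - t ≠ 0 := by
          intro h0
          rw [hqval, h0, mul_zero] at hqpos
          exact lt_irrefl _ hqpos
        rw [sub_mulVec, smul_mulVec, one_mulVec, smul_mulVec, hGv, hdx]
        funext i
        simp only [Pi.sub_apply, Pi.smul_apply, hd_def, smul_eq_mul, hqval, hc_def]
        field_simp [show b * a - t ≠ 0 by rwa [mul_comm]]
        ring
      · have key : c • (1 : Matrix (Fin k) (Fin k) ℝ) - (2 * c / q) • G + c • 1
            = (2 * c) • (1 : Matrix (Fin k) (Fin k) ℝ) - (2 * c / q) • G := by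
          ext i j
          simp only [Matrix.add_apply, Matrix.sub_apply, Matrix.smul_apply, smul_eq_mul]
          ring
        rw [key]
        refine .of_dotProduct_mulVec_nonneg ((herm_smul isHermitian_one _).sub (herm_smul hGh _)) fun v => ?_
        rw [sub_mulVec, dotProduct_sub, smul_mulVec, one_mulVec, smul_mulVec,
          hGv, dotProduct_smul, dotProduct_smul, dotProduct_smul]
        simp only [star_trivial, smul_eq_mul]
        have hcs : (d ⬝ᵥ v) ^ 2 ≤ q * (v ⬝ᵥ v) := by
          rw [hq]; exact dot_sq_le d v
        have h1 : 2 * c / q * ((d ⬝ᵥ v) * (d ⬝ᵥ v)) ≤ 2 * c * (v ⬝ᵥ v) := by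
          rw [← sq]
          calc 2 * c / q * (d ⬝ᵥ v) ^ 2 ≤ 2 * c / q * (q * (v ⬝ᵥ v)) :=
                mul_le_mul_of_nonneg_left hcs (by positivity)
            _ = 2 * c * (v ⬝ᵥ v) := by field_simp
        have h2 : v ⬝ᵥ d = d ⬝ᵥ v := dotProduct_comm v d
        rw [h2]
        linarith
  have hμ : (A₁ + E) - (lam - c) • (1 : Matrix (Fin k) (Fin k) ℝ)
      = (A₁ - lam • 1) + (E + c • 1) := by
    ext i j
    simp only [Matrix.sub_apply, Matrix.add_apply, Matrix.smul_apply, smul_eq_mul, sub_mul]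
    ring
  have hpsd2 : ((A₁ + E) - (lam - c) • (1 : Matrix (Fin k) (Fin k) ℝ)).PosSemidef := by
    rw [hμ]
    exact (sub_smul_one_posSemidef hA₁ hlam_le).add hEpsd
  have hposdef : (A₁ + E).PosDef := by
    have h1 : ((lam - c) • (1 : Matrix (Fin k) (Fin k) ℝ)).PosDef := by
      have h2 : ((lam - c) • (1 : Matrix (Fin k) (Fin k) ℝ))
          = diagonal (fun _ => lam - c) := by
        ext i j
        by_cases hij : i = j <;> simp [hij, diagonal, Matrix.one_apply]
      rw [h2]
      exact posDef_diagonal_iff.mpr fun i => by linarith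
    have h3 : A₁ + E = ((A₁ + E) - (lam - c) • 1) + (lam - c) • 1 := by
      rw [sub_add_cancel]
    rw [h3]
    exact Matrix.PosDef.posSemidef_add hpsd2 h1
  refine ⟨A₁ + E, hA₁.add hEh, hposdef, by rw [add_mulVec, hEx], ?_⟩
  exact le_ciInf fun i => eigenvalues_ge (hA₁.add hEh) hpsd2 i
end

section
/- Let a, ρ̄, τ_γ > 0 and 0 < τ₁ < 1. For every natural number T with (a·ρ̄)/(T+1)^{τ₁} ≤ 1 and a·ρ̄/(T+1)^{τ₁} ≥ τ_γ/(T+1), it holds that 1 − a·ρ̄/(T+1)^{τ₁} ≤ ((T+1)/(T+2))^{τ_γ}. -/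
open Real

lemma Real.neg_inv_le_log_div_add_one {t : ℝ} (ht : 0 < t) : -t⁻¹ ≤ log (t / (t + 1)) := by
  have h := one_sub_inv_le_log_of_pos (show 0 < t / (t + 1) by positivity)
  have hinv : 1 - (t / (t + 1))⁻¹ = -t⁻¹ := by field_simp; ring
  rwa [hinv] at h

lemma Real.exp_neg_div_le_div_add_one_rpow {t c : ℝ} (ht : 0 < t) (hc : 0 ≤ c) :
    exp (-(c / t)) ≤ (t / (t + 1)) ^ c := by
  rw [rpow_def_of_pos (by positivity), exp_le_exp]
  calc -(c / t) = -t⁻¹ * c := by ring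
    _ ≤ log (t / (t + 1)) * c := mul_le_mul_of_nonneg_right (neg_inv_le_log_div_add_one ht) hc

theorem stmt_6_general (a ρ τγ τ₁ : ℝ) (hτγ : 0 < τγ) (T : ℕ)
    (h2 : a * ρ / ((T : ℝ) + 1) ^ τ₁ ≥ τγ / ((T : ℝ) + 1)) :
    1 - a * ρ / ((T : ℝ) + 1) ^ τ₁ ≤ (((T : ℝ) + 1) / ((T : ℝ) + 2)) ^ τγ := by
  have hT : ((T : ℝ) + 1) + 1 = (T : ℝ) + 2 := by ring
  calc 1 - a * ρ / ((T : ℝ) + 1) ^ τ₁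
      ≤ exp (-(a * ρ / ((T : ℝ) + 1) ^ τ₁)) := one_sub_le_exp_neg _
    _ ≤ exp (-(τγ / ((T : ℝ) + 1))) := exp_le_exp.mpr (neg_le_neg h2)
    _ ≤ (((T : ℝ) + 1) / ((T : ℝ) + 2)) ^ τγ := by
      simpa only [hT] using exp_neg_div_le_div_add_one_rpow (t := (T : ℝ) + 1) (by positivity) hτγ.le

theorem stmt_6 (a ρ τγ τ₁ : ℝ) (ha : 0 < a) (hρ : 0 < ρ) (hτγ : 0 < τγ)
    (hτ₁ : 0 < τ₁) (hτ₁' : τ₁ < 1) (T : ℕ)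
    (h1 : a * ρ / ((T : ℝ) + 1) ^ τ₁ ≤ 1)
    (h2 : a * ρ / ((T : ℝ) + 1) ^ τ₁ ≥ τγ / ((T : ℝ) + 1)) :
    1 - a * ρ / ((T : ℝ) + 1) ^ τ₁ ≤ (((T : ℝ) + 1) / ((T : ℝ) + 2)) ^ τγ :=
  stmt_6_general a ρ τγ τ₁ hτγ T h2
end

section
/- Let (u_t) be a nonnegative sequence satisfying u_{t+1} ≤ (1 − β_t λ) u_t + C α_t γ_t, where λ, C > 0, α_t = a/(t+1)^{τ₁}, β_t = b/(t+1)^{τ₂}, γ_t = Γ/(t+1)^{τ_γ} with a, b, Γ > 0, 0 < τ₂ < τ₁ < 1, 0 < τ_γ, and β_t λ ≤ 1 for all t. Then for every τ₃ with 0 ≤ τ₃ < τ_γ + τ₁ − τ₂, lim_{t→∞} (t+1)^{τ₃} u_t = 0. -/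
open Filter

lemma aux_ev (M δ : ℝ) (hδ : 0 < δ) : ∀ᶠ t : ℕ in atTop, M ≤ ((t:ℝ)+1)^δ := by
  have h1 : Tendsto (fun t:ℕ => ((t:ℝ)+1)) atTop atTop :=
    tendsto_atTop_add_const_right _ 1 tendsto_natCast_atTop_atTop
  exact ((tendsto_rpow_atTop hδ).comp h1).eventually_ge_atTop M

lemma aux_exp (y : ℝ) : Real.exp y ≤ 1 + y * Real.exp y := by
  have h := Real.add_one_le_exp (-y)
  rw [Real.exp_neg] at h
  nlinarith [Real.exp_pos y, mul_le_mul_of_nonneg_right h (Real.exp_pos y).le,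
    inv_mul_cancel₀ (Real.exp_pos y).ne']

lemma aux_pow (x τ : ℝ) (hx0 : 0 < x) (hx1 : x ≤ 1) (hτ : 0 ≤ τ) :
    (1+x)^τ ≤ 1 + τ * Real.exp τ * x := by
  have h1 : (0:ℝ) < 1 + x := by linarith
  rw [Real.rpow_def_of_pos h1]
  have hlog : Real.log (1+x) ≤ x := by
    have := Real.log_le_sub_one_of_pos h1; linarith
  have h2 : τ * Real.log (1+x) ≤ τ * x := by
    exact mul_le_mul_of_nonneg_left hlog hτ
  have h3 : Real.exp (τ * Real.log (1+x)) ≤ Real.exp (τ * x) := Real.exp_le_exp.mpr h2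
  have h4 : Real.exp (τ * x) ≤ 1 + (τ*x) * Real.exp (τ*x) := aux_exp _
  have h5 : Real.exp (τ*x) ≤ Real.exp τ := Real.exp_le_exp.mpr (by nlinarith)
  have h6 : (τ*x) * Real.exp (τ*x) ≤ (τ*x) * Real.exp τ :=
    mul_le_mul_of_nonneg_left h5 (by positivity)
  calc Real.exp (Real.log (1+x) * τ) = Real.exp (τ * Real.log (1+x)) := by ring_nf
    _ ≤ Real.exp (τ*x) := h3
    _ ≤ 1 + (τ*x) * Real.exp (τ*x) := h4
    _ ≤ 1 + (τ*x) * Real.exp τ := by linarith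
    _ = 1 + τ * Real.exp τ * x := by ring

lemma aux_div (c τ : ℝ) (hc : 0 < c) (hτ0 : 0 < τ) (hτ1 : τ ≤ 1) :
    Tendsto (fun n => ∑ k ∈ Finset.range n, c / ((k:ℝ)+1)^τ) atTop atTop := by
  have hnn : ∀ k : ℕ, 0 ≤ c / ((k:ℝ)+1)^τ := fun k => by positivity
  rw [← not_summable_iff_tendsto_nat_atTop_of_nonneg hnn]
  intro hs
  have hle : ∀ k : ℕ, c / ((k:ℝ)+1) ≤ c / ((k:ℝ)+1)^τ := by
    intro k
    have h1 : ((k:ℝ)+1)^τ ≤ ((k:ℝ)+1) := by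
      nth_rewrite 2 [← Real.rpow_one ((k:ℝ)+1)]
      exact Real.rpow_le_rpow_of_exponent_le (by norm_num) hτ1
    have h2 : (0:ℝ) < ((k:ℝ)+1)^τ := by positivity
    exact div_le_div_of_nonneg_left hc.le h2 h1
  have hs2 : Summable (fun k : ℕ => c / ((k:ℝ)+1)) :=
    Summable.of_nonneg_of_le (fun k => by positivity) hle hs
  have hs3 : Summable (fun k : ℕ => 1 / ((k:ℝ)+1)) := by
    have := hs2.mul_left c⁻¹
    convert this using 2 with k
    exacts [rfl, by field_simp]
  have hs4 : Summable (fun k : ℕ => 1 / (k:ℝ)) := by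
    rw [← summable_nat_add_iff 1]
    convert hs3 using 2 with k
    exacts [rfl, by push_cast; rfl]
  exact Real.not_summable_one_div_natCast hs4

lemma aux_conv (v r : ℕ → ℝ) (hv : ∀ t, 0 ≤ v t) (hr0 : ∀ t, 0 ≤ r t) (hr1 : ∀ t, r t ≤ 1)
    (hdiv : Tendsto (fun n => ∑ k ∈ Finset.range n, r k) atTop atTop)
    (hrec : ∀ ε : ℝ, 0 < ε → ∀ᶠ t in atTop, v (t+1) ≤ (1 - r t) * v t + ε * r t) :
    Tendsto v atTop (nhds 0) := by
  rw [NormedAddCommGroup.tendsto_nhds_zero]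
  intro ε hε
  obtain ⟨T, hT⟩ := (eventually_atTop.mp (hrec (ε/2) (by linarith)))
  -- key inductive bound
  have key : ∀ t, T ≤ t → v t ≤ ε/2 + Real.exp (-(∑ k ∈ Finset.Ico T t, r k)) * v T := by
    intro t ht
    induction t, ht using Nat.le_induction with
    | base => simp [Finset.Ico_self]; linarith [hv T]
    | succ t ht ih =>
      have h1 := hT t ht
      have hE : (0:ℝ) ≤ Real.exp (-(∑ k ∈ Finset.Ico T t, r k)) * v T :=
        mul_nonneg (Real.exp_pos _).le (hv T)
      have h2 : v (t+1) ≤ (1 - r t) * (ε/2 + Real.exp (-(∑ k ∈ Finset.Ico T t, r k)) * v T) + (ε/2) * r t := by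
        calc v (t+1) ≤ (1 - r t) * v t + (ε/2) * r t := h1
          _ ≤ (1 - r t) * (ε/2 + Real.exp (-(∑ k ∈ Finset.Ico T t, r k)) * v T) + (ε/2) * r t := by
              have h1r : 0 ≤ 1 - r t := by linarith [hr1 t]
              exact add_le_add (mul_le_mul_of_nonneg_left (ih) h1r) le_rfl
      have h3 : (1 - r t) * Real.exp (-(∑ k ∈ Finset.Ico T t, r k)) ≤
          Real.exp (-(∑ k ∈ Finset.Ico T (t+1), r k)) := by
        rw [Finset.sum_Ico_succ_top ht, neg_add, Real.exp_add]
        have h4 : 1 - r t ≤ Real.exp (-(r t)) := by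
          have := Real.add_one_le_exp (-(r t)); linarith
        calc (1 - r t) * Real.exp (-(∑ k ∈ Finset.Ico T t, r k))
            ≤ Real.exp (-(r t)) * Real.exp (-(∑ k ∈ Finset.Ico T t, r k)) :=
              mul_le_mul_of_nonneg_right h4 (Real.exp_pos _).le
          _ = Real.exp (-(∑ k ∈ Finset.Ico T t, r k)) * Real.exp (-(r t)) := mul_comm _ _
      have h5 : (1 - r t) * (Real.exp (-(∑ k ∈ Finset.Ico T t, r k)) * v T) ≤
          Real.exp (-(∑ k ∈ Finset.Ico T (t+1), r k)) * v T := by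
        rw [← mul_assoc]
        exact mul_le_mul_of_nonneg_right h3 (hv T)
      nlinarith [hr0 t]
  -- the exp term tends to 0
  have htend : Tendsto (fun t => Real.exp (-(∑ k ∈ Finset.Ico T t, r k)) * v T) atTop (nhds 0) := by
    have hS : Tendsto (fun t => ∑ k ∈ Finset.Ico T t, r k) atTop atTop := by
      apply Tendsto.congr' (f₁ := fun t => ∑ k ∈ Finset.range t, r k - ∑ k ∈ Finset.range T, r k)
      · filter_upwards [eventually_ge_atTop T] with t ht
        exact (Finset.sum_Ico_eq_sub r ht).symm
      · exact tendsto_atTop_add_const_right _ _ hdiv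
    have := (Real.tendsto_exp_neg_atTop_nhds_zero.comp hS).mul_const (v T)
    simpa using this
  have hev : ∀ᶠ t in atTop, Real.exp (-(∑ k ∈ Finset.Ico T t, r k)) * v T < ε/2 := by
    have := htend.eventually (eventually_lt_nhds (show (0:ℝ) < ε/2 by linarith))
    simpa using this
  filter_upwards [hev, eventually_ge_atTop T] with t h1 h2
  have := key t h2
  rw [Real.norm_eq_abs, abs_of_nonneg (hv t)]
  linarith

lemma aux_B (X A B G Qd D T c' a' Γ' w ε : ℝ) (hA : 0 < A) (hB : 0 < B) (hG : 0 < G)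
    (hQd : 0 < Qd) (hD : 0 < D) (hc' : 0 < c') (ha' : 0 < a') (hΓ' : 0 < Γ')
    (hX : X ≤ T * A)
    (hBG : B * G = A * Qd * D)
    (hkey : T * (c' * a' * Γ') * 2 ≤ D * (ε * w)) :
    X * (c' * (a'/B) * (Γ'/G)) ≤ ε * (w/2/Qd) := by
  have h1 : X * (c' * (a'/B) * (Γ'/G)) ≤ T * A * (c' * (a'/B) * (Γ'/G)) :=
    mul_le_mul_of_nonneg_right hX (by positivity)
  refine h1.trans ?_
  have h2 : T * A * (c' * (a'/B) * (Γ'/G)) = (T * (c'*a'*Γ') * A) / (B*G) := by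
    field_simp
  rw [h2, hBG, show ε * (w/2/Qd) = (ε*(w/2))/Qd from by ring,
    div_le_div_iff₀ (by positivity) hQd]
  nlinarith [mul_le_mul_of_nonneg_right hkey (mul_pos hA hQd).le]

theorem stmt_11 (a b Γ C lam τ₁ τ₂ τγ : ℝ)
    (ha : 0 < a) (hb : 0 < b) (hΓ : 0 < Γ) (hC : 0 < C) (hlam : 0 < lam)
    (hτ₂ : 0 < τ₂) (hτ₂₁ : τ₂ < τ₁) (hτ₁ : τ₁ < 1) (hτγ : 0 < τγ)
    (u : ℕ → ℝ) (hu : ∀ t, 0 ≤ u t)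
    (hβ : ∀ t : ℕ, (b / ((t : ℝ) + 1) ^ τ₂) * lam ≤ 1)
    (hrec : ∀ t : ℕ, u (t + 1) ≤
      (1 - (b / ((t : ℝ) + 1) ^ τ₂) * lam) * u t +
        C * (a / ((t : ℝ) + 1) ^ τ₁) * (Γ / ((t : ℝ) + 1) ^ τγ)) :
    ∀ τ₃ : ℝ, 0 ≤ τ₃ → τ₃ < τγ + τ₁ - τ₂ →
      Tendsto (fun t : ℕ => ((t : ℝ) + 1) ^ τ₃ * u t) atTop (nhds 0) := by
  intro τ₃ hτ₃0 hτ₃lt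
  have hc : 0 < b * lam := mul_pos hb hlam
  have hP : ∀ t : ℕ, (0:ℝ) < (t:ℝ) + 1 := fun t => by positivity
  have hP1 : ∀ t : ℕ, (1:ℝ) ≤ (t:ℝ) + 1 := fun t => by
    have : (0:ℝ) ≤ (t:ℝ) := Nat.cast_nonneg t; linarith
  set K := τ₃ * Real.exp τ₃ with hKdef
  have hK : 0 ≤ K := mul_nonneg hτ₃0 (Real.exp_pos _).le
  -- β rewritten
  have hβ' : ∀ t : ℕ, b * lam / ((t:ℝ)+1)^τ₂ ≤ 1 := by
    intro t
    have h := hβ t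
    rwa [div_mul_eq_mul_div] at h
  apply aux_conv (fun t : ℕ => ((t:ℝ)+1)^τ₃ * u t)
      (fun t : ℕ => (b * lam / 2) / ((t:ℝ)+1)^τ₂)
  · intro t
    exact mul_nonneg (Real.rpow_nonneg (hP t).le _) (hu t)
  · intro t; positivity
  · intro t
    have hQ : (0:ℝ) < ((t:ℝ)+1)^τ₂ := Real.rpow_pos_of_pos (hP t) _
    have h := hβ' t
    have he : (b*lam/2) / ((t:ℝ)+1)^τ₂ = (b*lam/((t:ℝ)+1)^τ₂)/2 := by ring
    rw [he]; linarith
  · exact aux_div _ _ (by positivity) hτ₂ (by linarith)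
  · intro ε hε
    filter_upwards [aux_ev (K / (b*lam/2)) (1-τ₂) (by linarith),
      aux_ev (2^τ₃*(C*a*Γ)*2/(ε*(b*lam))) (τγ+τ₁-τ₂-τ₃) (by linarith)] with t hA hB
    show ((↑(t+1):ℝ)+1)^τ₃ * u (t+1) ≤ _
    push_cast
    set P := (t:ℝ) + 1 with hPdef
    have hPt : (0:ℝ) < P := hP t
    have hPt1 : (1:ℝ) ≤ P := hP1 t
    have hQ : (0:ℝ) < P ^ τ₂ := Real.rpow_pos_of_pos hPt _
    have hQ1 : (0:ℝ) < P ^ τ₁ := Real.rpow_pos_of_pos hPt _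
    have hQγ : (0:ℝ) < P ^ τγ := Real.rpow_pos_of_pos hPt _
    have hQ3 : (0:ℝ) < P ^ τ₃ := Real.rpow_pos_of_pos hPt _
    have hQδ : (0:ℝ) < P ^ (τγ+τ₁-τ₂-τ₃) := Real.rpow_pos_of_pos hPt _
    -- recursion rewritten
    have hrec' : u (t+1) ≤ (1 - b*lam/P^τ₂) * u t + C * (a/P^τ₁) * (Γ/P^τγ) := by
      have h := hrec t
      rwa [div_mul_eq_mul_div] at h
    -- Step A1 : (P+1)^τ₃ ≤ (1 + K/P) * P^τ₃
    have hA1 : (P+1)^τ₃ ≤ (1 + K/P) * P^τ₃ := by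
      have heq : P + 1 = (1 + 1/P) * P := by field_simp
      rw [heq, Real.mul_rpow (by positivity) hPt.le]
      have h1 : (1 + 1/P)^τ₃ ≤ 1 + K * (1/P) :=
        aux_pow (1/P) τ₃ (by positivity) (by rw [div_le_one hPt]; exact hPt1) hτ₃0
      have h2 : (1:ℝ) + K * (1/P) = 1 + K/P := by ring
      rw [h2] at h1
      exact mul_le_mul_of_nonneg_right h1 hQ3.le
    -- Step A2 : K/P ≤ (b*lam/2)/P^τ₂
    have hKP : K/P ≤ (b*lam/2)/P^τ₂ := by
      rw [div_le_iff₀ (by positivity)] at hA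
      have hprod : P^τ₂ * P^(1-τ₂) = P := by
        rw [← Real.rpow_add hPt, show τ₂ + (1-τ₂) = 1 by ring, Real.rpow_one]
      rw [div_le_div_iff₀ hPt hQ]
      nlinarith [mul_le_mul_of_nonneg_right hA hQ.le]
    -- Step A3 : contraction factor bound
    have hcQ0 : 0 ≤ 1 - b*lam/P^τ₂ := by linarith [hβ' t]
    have hcQnn : 0 ≤ b*lam/P^τ₂ := by positivity
    have hKPnn : 0 ≤ K/P := by positivity
    have hA2 : (1 + K/P) * (1 - b*lam/P^τ₂) ≤ 1 - (b*lam/2)/P^τ₂ := by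
      have he : (b*lam/2)/P^τ₂ = (b*lam/P^τ₂)/2 := by ring
      nlinarith [mul_nonneg hKPnn hcQnn]
    have hfirst : (P+1)^τ₃ * (1 - b*lam/P^τ₂) ≤ (1 - (b*lam/2)/P^τ₂) * P^τ₃ := by
      calc (P+1)^τ₃ * (1 - b*lam/P^τ₂)
          ≤ ((1 + K/P) * P^τ₃) * (1 - b*lam/P^τ₂) :=
            mul_le_mul_of_nonneg_right hA1 hcQ0
        _ = ((1 + K/P) * (1 - b*lam/P^τ₂)) * P^τ₃ := by ring
        _ ≤ (1 - (b*lam/2)/P^τ₂) * P^τ₃ := mul_le_mul_of_nonneg_right hA2 hQ3.le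
    -- Step B : forcing term bound
    have hsecond : (P+1)^τ₃ * (C * (a/P^τ₁) * (Γ/P^τγ)) ≤ ε * ((b*lam/2)/P^τ₂) := by
      have h2A : (P+1)^τ₃ ≤ 2^τ₃ * P^τ₃ := by
        calc (P+1)^τ₃ ≤ (2*P)^τ₃ :=
              Real.rpow_le_rpow (by positivity) (by linarith) hτ₃0
          _ = 2^τ₃ * P^τ₃ := Real.mul_rpow (by norm_num) hPt.le
      have hprod : P^τ₁ * P^τγ = P^τ₃ * P^τ₂ * P^(τγ+τ₁-τ₂-τ₃) := by
        rw [← Real.rpow_add hPt, ← Real.rpow_add hPt, ← Real.rpow_add hPt]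
        ring_nf
      rw [div_le_iff₀ (by positivity)] at hB
      have hkey : 2^τ₃ * (C*a*Γ) * 2 ≤ P^(τγ+τ₁-τ₂-τ₃) * (ε * (b*lam)) := by linarith
      have := aux_B ((P+1)^τ₃) (P^τ₃) (P^τ₁) (P^τγ) (P^τ₂) (P^(τγ+τ₁-τ₂-τ₃)) (2^τ₃)
        C a Γ (b*lam) ε hQ3 hQ1 hQγ hQ hQδ hC ha hΓ h2A hprod hkey
      linarith [this]
    calc (P+1)^τ₃ * u (t+1)
        ≤ (P+1)^τ₃ * ((1 - b*lam/P^τ₂) * u t + C * (a/P^τ₁) * (Γ/P^τγ)) :=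
          mul_le_mul_of_nonneg_left hrec' (Real.rpow_nonneg (by positivity : (0:ℝ) ≤ P+1) _)
      _ = (P+1)^τ₃ * (1 - b*lam/P^τ₂) * u t + (P+1)^τ₃ * (C * (a/P^τ₁) * (Γ/P^τγ)) := by
          ring
      _ ≤ (1 - (b*lam/2)/P^τ₂) * P^τ₃ * u t + ε * ((b*lam/2)/P^τ₂) :=
          add_le_add (mul_le_mul_of_nonneg_right hfirst (hu t)) hsecond
      _ = (1 - (b*lam/2)/P^τ₂) * (P^τ₃ * u t) + ε * ((b*lam/2)/P^τ₂) := by ring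
end
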